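/- arXiv:1707.03168 — 2 statements merged into one kernel-verified Lean document; each statement's English description precedes it below -/
import Mathlib

section
/- For every δ > 0 and natural number n ≥ 1, ∫₀^δ ((1 + e^{-t})/2)^n dt ≤ (1/n)·(2δ/(1 - e^{-δ})). -/
/-!
Write `c = n (1 - e^{-δ}) / (2δ)`. On `[0, δ]` the concave function `1 - e^{-t}` lies above its
chord `t (1 - e^{-δ}) / δ`, and `1 - x ≤ e^{-x}`, so the integrand is at most `e^{-c t}`, whose
integral over `[0, ∞)` is `1 / c`.
-/

open Real Set MeasureTheory

lemma div_mul_one_sub_exp_neg_le {t δ : ℝ} (ht : 0 ≤ t) (htδ : t ≤ δ) :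
    t / δ * (1 - exp (-δ)) ≤ 1 - exp (-t) := by
  have hw : t / δ ≤ 1 := div_le_one_of_le₀ htδ (ht.trans htδ)
  have hcancel : t / δ * δ = t := div_mul_cancel_of_imp fun hδ => by linarith
  have hconv := convexOn_exp.2 (mem_univ 0) (mem_univ (-δ)) (sub_nonneg.2 hw)
    (div_nonneg ht (ht.trans htδ)) (sub_add_cancel 1 (t / δ))
  simp only [smul_eq_mul, mul_zero, zero_add, mul_neg, hcancel, exp_zero, mul_one] at hconv
  linarith

lemma one_add_div_two_le_exp (x : ℝ) : (1 + x) / 2 ≤ exp (-((1 - x) / 2)) := by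
  linarith [add_one_le_exp (-((1 - x) / 2))]

lemma one_add_exp_neg_div_two_pow_le {t δ : ℝ} (ht : 0 ≤ t) (htδ : t ≤ δ) (n : ℕ) :
    ((1 + exp (-t)) / 2) ^ n ≤ exp (-(n * (1 - exp (-δ)) / (2 * δ)) * t) :=
  calc ((1 + exp (-t)) / 2) ^ n
      ≤ exp (-((1 - exp (-t)) / 2)) ^ n :=
        pow_le_pow_left₀ (by positivity) (one_add_div_two_le_exp _) n
    _ = exp (-(n / 2 * (1 - exp (-t)))) := by rw [← exp_nat_mul]; ring_nf
    _ ≤ exp (-(n * (1 - exp (-δ)) / (2 * δ)) * t) := by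
        have hchord := div_mul_one_sub_exp_neg_le ht htδ
        rw [exp_le_exp, neg_mul, neg_le_neg_iff]
        calc (n * (1 - exp (-δ)) / (2 * δ)) * t = n / 2 * (t / δ * (1 - exp (-δ))) := by ring
          _ ≤ n / 2 * (1 - exp (-t)) := by gcongr

lemma intervalIntegral_exp_neg_mul_le_inv {c δ : ℝ} (hc : 0 < c) (hδ : 0 ≤ δ) :
    ∫ t in (0 : ℝ)..δ, exp (-c * t) ≤ c⁻¹ := by
  rw [intervalIntegral.integral_of_le hδ]
  calc ∫ t in Ioc 0 δ, exp (-c * t)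
      ≤ ∫ t in Ioi 0, exp (-c * t) :=
        setIntegral_mono_set (exp_neg_integrableOn_Ioi 0 hc)
          (Filter.Eventually.of_forall fun t => (exp_pos _).le) Ioc_subset_Ioi_self.eventuallyLE
    _ = c⁻¹ := by
        rw [integral_exp_mul_Ioi (neg_lt_zero.2 hc)]
        simp

theorem stmt_4 (δ : ℝ) (hδ : 0 < δ) (n : ℕ) (hn : 1 ≤ n) :
    ∫ t in (0:ℝ)..δ, ((1 + Real.exp (-t)) / 2) ^ n
      ≤ (1 / (n : ℝ)) * (2 * δ / (1 - Real.exp (-δ))) := by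
  have hgap : 0 < 1 - exp (-δ) := sub_pos.2 (exp_lt_one_iff.2 (neg_lt_zero.2 hδ))
  have hc : 0 < n * (1 - exp (-δ)) / (2 * δ) :=
    div_pos (mul_pos (Nat.cast_pos.2 hn) hgap) (by positivity)
  calc ∫ t in (0:ℝ)..δ, ((1 + exp (-t)) / 2) ^ n
      ≤ ∫ t in (0:ℝ)..δ, exp (-(n * (1 - exp (-δ)) / (2 * δ)) * t) :=
        intervalIntegral.integral_mono_on hδ.le
          (Continuous.intervalIntegrable (by fun_prop) _ _)
          (Continuous.intervalIntegrable (by fun_prop) _ _)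
          fun t ht => one_add_exp_neg_div_two_pow_le ht.1 ht.2 n
    _ ≤ (n * (1 - exp (-δ)) / (2 * δ))⁻¹ := intervalIntegral_exp_neg_mul_le_inv hc hδ.le
    _ = 1 / n * (2 * δ / (1 - exp (-δ))) := by field_simp
end

section
/- Let ρ ∈ [0,1] and let φ, Φ be the standard normal density and CDF. Then 2·∑_{k=1}^{∞} (Φ(2k) - Φ(2k - 2ρ)) ≥ ρ·2·(1 - Φ(2)) and 2·∑_{k=0}^{∞} (Φ(2k + 2ρ) - Φ(2k)) ≤ ρ·(1 + 4φ(0)). In particular the limiting probability, as n → ∞, that a Binomial(4n², 1/2) random variable reduced modulo 2n lies in a union of residue intervals of total density ρ is between 2(1 - Φ(2))·ρ and (1 + 4φ(0))·ρ. -/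
open MeasureTheory Set Filter

noncomputable def stdGaussianPDF (x : ℝ) : ℝ :=
  (Real.sqrt (2 * Real.pi))⁻¹ * Real.exp (-x ^ 2 / 2)

noncomputable def stdGaussianCDF (x : ℝ) : ℝ :=
  ∫ t in Set.Iic x, stdGaussianPDF t

lemma sg_pdf_nonneg (x : ℝ) : 0 ≤ stdGaussianPDF x :=
  mul_nonneg (inv_nonneg.2 (Real.sqrt_nonneg _)) (Real.exp_pos _).le

lemma sg_integrable : Integrable stdGaussianPDF := by
  have h := (integrable_exp_neg_mul_sq (show (0:ℝ) < 1/2 by norm_num)).const_mul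
    (Real.sqrt (2 * Real.pi))⁻¹
  refine h.congr ?_
  refine Filter.EventuallyEq.of_eq (funext fun x => ?_)
  simp only [stdGaussianPDF]
  ring_nf

lemma sg_total : ∫ x, stdGaussianPDF x = 1 := by
  have h2π : (0:ℝ) < 2 * Real.pi := by positivity
  have : ∫ x : ℝ, stdGaussianPDF x
      = (Real.sqrt (2 * Real.pi))⁻¹ * ∫ x : ℝ, Real.exp (-(1/2) * x ^ 2) := by
    rw [← integral_const_mul]
    congr 1; funext x; simp only [stdGaussianPDF]; ring_nf
  rw [this, integral_gaussian]
  rw [show Real.pi / (1/2) = 2 * Real.pi by ring]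
  field_simp

lemma sg_cdf_mono : Monotone stdGaussianCDF := by
  intro a b hab
  exact setIntegral_mono_set sg_integrable.integrableOn
    (Filter.Eventually.of_forall fun x => sg_pdf_nonneg x)
    (HasSubset.Subset.eventuallyLE (Iic_subset_Iic.2 hab))

lemma sg_cdf_le_one (x : ℝ) : stdGaussianCDF x ≤ 1 := by
  rw [← sg_total]
  exact setIntegral_le_integral sg_integrable
    (Filter.Eventually.of_forall fun x => sg_pdf_nonneg x)

lemma sg_cdf_sub (a b : ℝ) :
    stdGaussianCDF b - stdGaussianCDF a = ∫ x in a..b, stdGaussianPDF x :=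
  intervalIntegral.integral_Iic_sub_Iic sg_integrable.integrableOn sg_integrable.integrableOn

lemma sg_pdf_anti {x y : ℝ} (hx : 0 ≤ x) (hxy : x ≤ y) :
    stdGaussianPDF y ≤ stdGaussianPDF x := by
  unfold stdGaussianPDF
  refine mul_le_mul_of_nonneg_left (Real.exp_le_exp.2 ?_) (inv_nonneg.2 (Real.sqrt_nonneg _))
  nlinarith

lemma sg_lower {a b : ℝ} (ha : 0 ≤ a) (hab : a ≤ b) :
    (b - a) * stdGaussianPDF b ≤ stdGaussianCDF b - stdGaussianCDF a := by
  rw [sg_cdf_sub]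
  have h := intervalIntegral.integral_mono_on hab
    (intervalIntegrable_const (c := stdGaussianPDF b))
    (sg_integrable.intervalIntegrable)
    (fun x hx => sg_pdf_anti (ha.trans hx.1) hx.2)
  simpa [smul_eq_mul] using h

lemma sg_upper {a b : ℝ} (ha : 0 ≤ a) (hab : a ≤ b) :
    stdGaussianCDF b - stdGaussianCDF a ≤ (b - a) * stdGaussianPDF a := by
  rw [sg_cdf_sub]
  have h := intervalIntegral.integral_mono_on hab
    (sg_integrable.intervalIntegrable)
    (intervalIntegrable_const (c := stdGaussianPDF a))
    (fun x hx => sg_pdf_anti ha hx.1)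
  simpa [smul_eq_mul] using h

lemma sg_cdf_zero : stdGaussianCDF 0 = 1/2 := by
  have heven : ∀ x : ℝ, stdGaussianPDF (-x) = stdGaussianPDF x := by
    intro x; simp [stdGaussianPDF]
  have h1 : stdGaussianCDF 0 + ∫ x in Ioi (0:ℝ), stdGaussianPDF x = 1 := by
    rw [stdGaussianCDF, intervalIntegral.integral_Iic_add_Ioi
      sg_integrable.integrableOn sg_integrable.integrableOn, sg_total]
  have h2 : (∫ x in Ioi (0:ℝ), stdGaussianPDF x) = stdGaussianCDF 0 := by
    rw [stdGaussianCDF]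
    rw [show Ioi (0:ℝ) = Ioi (-(0:ℝ)) by norm_num, ← integral_comp_neg_Iic]
    simp only [heven]
  rw [h2] at h1; linarith

lemma sg_two_le (k : ℕ) :
    2 * stdGaussianPDF (2*((k:ℝ)+1)) ≤ stdGaussianCDF (2*((k:ℝ)+1)) - stdGaussianCDF (2*(k:ℝ)) := by
  have := sg_lower (a := 2*(k:ℝ)) (b := 2*((k:ℝ)+1)) (by positivity)
    (by linarith [Nat.cast_nonneg (α := ℝ) k])
  linarith [this]

lemma sg_tele (n : ℕ) :
    ∑ k ∈ Finset.range n, (stdGaussianCDF (2*((k:ℝ)+1)) - stdGaussianCDF (2*(k:ℝ)))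
      = stdGaussianCDF (2*(n:ℝ)) - stdGaussianCDF 0 := by
  have h := Finset.sum_range_sub (f := fun k : ℕ => stdGaussianCDF (2*(k:ℝ))) n
  have e : ∀ k : ℕ, stdGaussianCDF (2*(((k+1):ℕ):ℝ)) = stdGaussianCDF (2*((k:ℝ)+1)) := by
    intro k; push_cast; ring_nf
  calc ∑ k ∈ Finset.range n, (stdGaussianCDF (2*((k:ℝ)+1)) - stdGaussianCDF (2*(k:ℝ)))
      = ∑ k ∈ Finset.range n,
          (stdGaussianCDF (2*(((k+1):ℕ):ℝ)) - stdGaussianCDF (2*(k:ℝ))) := by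
        refine Finset.sum_congr rfl fun k _ => by rw [e k]
    _ = stdGaussianCDF (2*(n:ℝ)) - stdGaussianCDF (2*((0:ℕ):ℝ)) := h
    _ = stdGaussianCDF (2*(n:ℝ)) - stdGaussianCDF 0 := by norm_num

lemma sg_range_shift_le (n : ℕ) :
    ∑ k ∈ Finset.range n, stdGaussianPDF (2*((k:ℝ)+1)) ≤ 1/4 := by
  have h1 : ∑ k ∈ Finset.range n, stdGaussianPDF (2*((k:ℝ)+1))
      ≤ ∑ k ∈ Finset.range n,
          (stdGaussianCDF (2*((k:ℝ)+1)) - stdGaussianCDF (2*(k:ℝ))) / 2 :=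
    Finset.sum_le_sum fun k _ => by linarith [sg_two_le k]
  rw [← Finset.sum_div, sg_tele, sg_cdf_zero] at h1
  have := sg_cdf_le_one (2*(n:ℝ))
  linarith

lemma sg_summable_shift : Summable (fun k : ℕ => stdGaussianPDF (2*((k:ℝ)+1))) :=
  summable_of_sum_range_le (fun _ => sg_pdf_nonneg _) sg_range_shift_le

lemma sg_tsum_shift_le : ∑' k : ℕ, stdGaussianPDF (2*((k:ℝ)+1)) ≤ 1/4 :=
  Real.tsum_le_of_sum_range_le (fun _ => sg_pdf_nonneg _) sg_range_shift_le

lemma sg_tendsto : Filter.Tendsto (fun n : ℕ => stdGaussianCDF (2*((n:ℝ)+1)))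
    Filter.atTop (nhds 1) := by
  have h1 : Filter.Tendsto (fun n : ℕ => (n:ℝ)+1) Filter.atTop Filter.atTop :=
    Filter.tendsto_atTop_add_const_right _ 1 tendsto_natCast_atTop_atTop
  have hb : Filter.Tendsto (fun n : ℕ => 2*((n:ℝ)+1)) Filter.atTop Filter.atTop :=
    h1.const_mul_atTop two_pos
  have h := (MeasureTheory.aecover_Iic (μ := (volume : Measure ℝ)) hb
    ).integral_tendsto_of_countably_generated sg_integrable
  rw [sg_total] at h
  exact h

lemma sg_tsum_g : ∑' k : ℕ, (stdGaussianCDF (2*((k:ℝ)+2)) - stdGaussianCDF (2*((k:ℝ)+1)))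
    = 1 - stdGaussianCDF 2 := by
  set g : ℕ → ℝ := fun k => stdGaussianCDF (2*((k:ℝ)+2)) - stdGaussianCDF (2*((k:ℝ)+1)) with hg
  have hgle : ∀ k : ℕ, g k ≤ 2 * stdGaussianPDF (2*((k:ℝ)+1)) := by
    intro k
    have := sg_upper (a := 2*((k:ℝ)+1)) (b := 2*((k:ℝ)+2)) (by positivity)
      (by linarith [Nat.cast_nonneg (α := ℝ) k])
    simp only [hg]; linarith [this]
  have hgnn : ∀ k : ℕ, 0 ≤ g k := fun k =>
    sub_nonneg.2 (sg_cdf_mono (by linarith [Nat.cast_nonneg (α := ℝ) k]))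
  have hs : Summable g := Summable.of_nonneg_of_le hgnn hgle (sg_summable_shift.mul_left 2)
  have hpart : ∀ n : ℕ, ∑ k ∈ Finset.range n, g k
      = stdGaussianCDF (2*((n:ℝ)+1)) - stdGaussianCDF 2 := by
    intro n
    have h := Finset.sum_range_sub (f := fun k : ℕ => stdGaussianCDF (2*((k:ℝ)+1))) n
    have e : ∀ k : ℕ, stdGaussianCDF (2*((((k+1):ℕ):ℝ)+1)) = stdGaussianCDF (2*((k:ℝ)+2)) := by
      intro k; push_cast; ring_nf
    calc ∑ k ∈ Finset.range n, g k
        = ∑ k ∈ Finset.range n,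
            (stdGaussianCDF (2*((((k+1):ℕ):ℝ)+1)) - stdGaussianCDF (2*((k:ℝ)+1))) := by
          refine Finset.sum_congr rfl fun k _ => by rw [e k]
      _ = stdGaussianCDF (2*((n:ℝ)+1)) - stdGaussianCDF (2*(((0:ℕ):ℝ)+1)) := h
      _ = stdGaussianCDF (2*((n:ℝ)+1)) - stdGaussianCDF 2 := by norm_num
  have t1 := hs.hasSum.tendsto_sum_nat
  have t2 : Filter.Tendsto (fun n => ∑ k ∈ Finset.range n, g k) Filter.atTop
      (nhds (1 - stdGaussianCDF 2)) := by
    simp only [hpart]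
    exact sg_tendsto.sub_const _
  exact tendsto_nhds_unique t1 t2

lemma sg_tsum_shift_ge : (1 - stdGaussianCDF 2) / 2 ≤ ∑' k : ℕ, stdGaussianPDF (2*((k:ℝ)+1)) := by
  have h := Summable.tsum_le_tsum (f := fun k : ℕ =>
      stdGaussianCDF (2*((k:ℝ)+2)) - stdGaussianCDF (2*((k:ℝ)+1)))
    (g := fun k : ℕ => 2 * stdGaussianPDF (2*((k:ℝ)+1)))
    (fun k => by
      have h := sg_upper (a := 2*((k:ℝ)+1)) (b := 2*((k:ℝ)+2)) (by positivity)
        (by linarith [Nat.cast_nonneg (α := ℝ) k])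
      rw [show (2*((k:ℝ)+2) - 2*((k:ℝ)+1)) = 2 by ring] at h
      simpa using h)
    ?_ (sg_summable_shift.mul_left 2)
  · rw [sg_tsum_g, tsum_mul_left] at h
    linarith
  · refine Summable.of_nonneg_of_le
      (fun k => sub_nonneg.2 (sg_cdf_mono (by linarith [Nat.cast_nonneg (α := ℝ) k])))
      (fun k => by
        have h := sg_upper (a := 2*((k:ℝ)+1)) (b := 2*((k:ℝ)+2)) (by positivity)
          (by linarith [Nat.cast_nonneg (α := ℝ) k])
        rw [show (2*((k:ℝ)+2) - 2*((k:ℝ)+1)) = 2 by ring] at h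
        simpa using h)
      (sg_summable_shift.mul_left 2)

lemma sg_summable_tele : Summable (fun k : ℕ =>
    stdGaussianCDF (2*((k:ℝ)+1)) - stdGaussianCDF (2*(k:ℝ))) := by
  refine summable_of_sum_range_le (c := 1/2)
    (fun k => sub_nonneg.2 (sg_cdf_mono (by linarith [Nat.cast_nonneg (α := ℝ) k]))) ?_
  intro n
  rw [sg_tele, sg_cdf_zero]
  linarith [sg_cdf_le_one (2*(n:ℝ))]

lemma sg_summable_even : Summable (fun k : ℕ => stdGaussianPDF (2*(k:ℝ))) := by
  have h : Summable (fun k : ℕ => stdGaussianPDF (2*(((k+1):ℕ):ℝ))) :=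
    sg_summable_shift.congr (fun k => by norm_cast)
  exact (summable_nat_add_iff 1).mp h

lemma sg_tsum_even_le : ∑' k : ℕ, stdGaussianPDF (2*(k:ℝ)) ≤ stdGaussianPDF 0 + 1/4 := by
  rw [Summable.tsum_eq_zero_add sg_summable_even]
  have e1 : stdGaussianPDF (2*((0:ℕ):ℝ)) = stdGaussianPDF 0 := by norm_num
  have e2 : ∑' k : ℕ, stdGaussianPDF (2*(((k+1):ℕ):ℝ))
      = ∑' k : ℕ, stdGaussianPDF (2*((k:ℝ)+1)) := tsum_congr (fun k => by norm_cast)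
  rw [e1, e2]
  linarith [sg_tsum_shift_le]

theorem stmt_18 (ρ : ℝ) (hρ0 : 0 ≤ ρ) (hρ1 : ρ ≤ 1) :
    2 * (∑' k : ℕ, (stdGaussianCDF (2 * (k + 1)) - stdGaussianCDF (2 * (k + 1) - 2 * ρ)))
        ≥ ρ * (2 * (1 - stdGaussianCDF 2)) ∧
    2 * (∑' k : ℕ, (stdGaussianCDF (2 * k + 2 * ρ) - stdGaussianCDF (2 * k)))
        ≤ ρ * (1 + 4 * stdGaussianPDF 0) := by
  constructor
  · -- lower bound
    have hterm : ∀ k : ℕ, 2 * ρ * stdGaussianPDF (2*((k:ℝ)+1))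
        ≤ stdGaussianCDF (2 * ((k:ℝ) + 1)) - stdGaussianCDF (2 * ((k:ℝ) + 1) - 2 * ρ) := by
      intro k
      have h := sg_lower (a := 2 * ((k:ℝ) + 1) - 2 * ρ) (b := 2 * ((k:ℝ) + 1))
        (by linarith [Nat.cast_nonneg (α := ℝ) k]) (by linarith)
      rw [show 2 * ((k:ℝ) + 1) - (2 * ((k:ℝ) + 1) - 2 * ρ) = 2 * ρ by ring] at h
      exact h
    have hsum : Summable (fun k : ℕ =>
        stdGaussianCDF (2 * ((k:ℝ) + 1)) - stdGaussianCDF (2 * ((k:ℝ) + 1) - 2 * ρ)) := by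
      refine Summable.of_nonneg_of_le
        (fun k => sub_nonneg.2 (sg_cdf_mono (by linarith)))
        (fun k => ?_) sg_summable_tele
      have : stdGaussianCDF (2*(k:ℝ)) ≤ stdGaussianCDF (2 * ((k:ℝ) + 1) - 2 * ρ) :=
        sg_cdf_mono (by linarith)
      linarith [this]
    have h1 := Summable.tsum_le_tsum hterm (sg_summable_shift.mul_left (2 * ρ)) hsum
    rw [tsum_mul_left] at h1
    have h2 : 2 * ρ * ((1 - stdGaussianCDF 2) / 2)
        ≤ 2 * ρ * ∑' k : ℕ, stdGaussianPDF (2*((k:ℝ)+1)) :=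
      mul_le_mul_of_nonneg_left sg_tsum_shift_ge (by positivity)
    rw [ge_iff_le]
    linarith
  · -- upper bound
    have hterm : ∀ k : ℕ, stdGaussianCDF (2 * (k:ℝ) + 2 * ρ) - stdGaussianCDF (2 * (k:ℝ))
        ≤ 2 * ρ * stdGaussianPDF (2*(k:ℝ)) := by
      intro k
      have h := sg_upper (a := 2 * (k:ℝ)) (b := 2 * (k:ℝ) + 2 * ρ)
        (by positivity) (by linarith)
      rw [show 2 * (k:ℝ) + 2 * ρ - 2 * (k:ℝ) = 2 * ρ by ring] at h
      exact h
    have hsum : Summable (fun k : ℕ =>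
        stdGaussianCDF (2 * (k:ℝ) + 2 * ρ) - stdGaussianCDF (2 * (k:ℝ))) :=
      Summable.of_nonneg_of_le
        (fun k => sub_nonneg.2 (sg_cdf_mono (by linarith)))
        hterm (sg_summable_even.mul_left (2 * ρ))
    have h1 := Summable.tsum_le_tsum hterm hsum (sg_summable_even.mul_left (2 * ρ))
    rw [tsum_mul_left] at h1
    have h2 : 2 * ρ * (∑' k : ℕ, stdGaussianPDF (2*(k:ℝ)))
        ≤ 2 * ρ * (stdGaussianPDF 0 + 1/4) :=
      mul_le_mul_of_nonneg_left sg_tsum_even_le (by positivity)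
    linarith
end
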